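/- Let f₁, …, f_d : 𝒱 → ℝ be given functions and for θ ∈ Θ, j ∈ {1,…,d}, X ∈ 𝒳* define h_{θ,j}(X) := Σ_{i∈𝒱} f_j(i)·P_θ(i|X), and for any function h : 𝒳* → ℝ define the linear functional L_X(h) := Σ_{X̃∈𝒳*} T(X̃|X)·h(X̃). Suppose that for every θ, θ' ∈ Θ, if L_X(h_{θ,j}) = L_X(h_{θ',j}) for all X ∈ 𝒳 and all j ∈ {1,…,d}, then the base models coincide, i.e., P_θ(·|X̃) = P_{θ'}(·|X̃) for all X̃ ∈ 𝒳*. Then the perturbation cost ℰ_{T,𝒫^base,δ} equals zero for every δ > 0. -/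
import Mathlib


open Finset

/-- Total variation distance between two real-valued functions on a finite set. -/
noncomputable def tvDist {V : Type*} [Fintype V] (p q : V → ℝ) : ℝ :=
  (1 / 2) * ∑ i, |p i - q i|

/-- Distance from a prefix to the (nonempty, finite) training support. -/
noncomputable def distToSupp {Xs : Type*} (M : Xs → Xs → ℝ)
    (supp : Finset Xs) (h : supp.Nonempty) (X : Xs) : ℝ :=
  supp.inf' h fun X₀ => M X X₀

/-- The perturbed model: first perturb the prefix via the kernel `T`, then apply `P`. -/
noncomputable def perturbedModel {Θ Xs V : Type*} [Fintype Xs]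
    (T : Xs → Xs → ℝ) (P : Θ → Xs → V → ℝ) (θ : Θ) (X : Xs) (i : V) : ℝ :=
  ∑ Xt, T X Xt * P θ Xt i

/-- Extrapolation uncertainty of the model class `{P θ : θ ∈ Θ}` at level `δ`. -/
noncomputable def extrapUncertainty {Θ Xs V : Type*} [Fintype V]
    (M : Xs → Xs → ℝ) (supp : Finset Xs) (h : supp.Nonempty)
    (P : Θ → Xs → V → ℝ) (δ : ℝ) : ℝ :=
  sSup { r | ∃ X' θ θ',
    distToSupp M supp h X' ≤ δ ∧
    (∀ X ∈ supp, tvDist (P θ X) (P θ' X) = 0) ∧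
    r = tvDist (P θ X') (P θ' X') }

/-- The perturbation cost `ℰ_{T,𝒫^base,δ}`. -/
noncomputable def perturbCost {Θ Xs V : Type*} [Fintype Xs] [Fintype V]
    (M : Xs → Xs → ℝ) (supp : Finset Xs) (h : supp.Nonempty)
    (T : Xs → Xs → ℝ) (P : Θ → Xs → V → ℝ) (δ : ℝ) : ℝ :=
  sSup { r | ∃ X' Xstar θ θ',
    distToSupp M supp h X' ≤ δ ∧ 0 < T X' Xstar ∧
    (∀ X ∈ supp, tvDist (perturbedModel T P θ X) (perturbedModel T P θ' X) = 0) ∧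
    r = sInf { s | ∃ θ₀ θ₀',
      (∀ X ∈ supp, tvDist (P θ₀ X) (P θ₀' X) = 0) ∧
      s = tvDist (fun i => P θ Xstar i - P θ₀ Xstar i)
                 (fun i => P θ' Xstar i - P θ₀' Xstar i) } }

lemma tvDist_nonneg' {V : Type*} [Fintype V] (p q : V → ℝ) : 0 ≤ tvDist p q := by
  unfold tvDist
  positivity

lemma tvDist_eq_zero_iff {V : Type*} [Fintype V] (p q : V → ℝ) :
    tvDist p q = 0 ↔ p = q := by
  unfold tvDist
  rw [mul_eq_zero]
  constructor
  · rintro (h | h)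
    · norm_num at h
    · funext i
      have := (Finset.sum_eq_zero_iff_of_nonneg (fun i _ => abs_nonneg (p i - q i))).1 h
        i (Finset.mem_univ i)
      have := abs_eq_zero.1 this
      linarith
  · intro h
    right
    subst h
    simp

/-- **RKHS-type identifiability.** Given functions `f₁,…,f_d : 𝒱 → ℝ`, set
`h_{θ,j}(X) := Σ_i f_j(i)·P_θ(i|X)` and `L_X(h) := Σ_{Xt} T(Xt|X)·h(Xt)`. If equality of
`L_X(h_{θ,j})` and `L_X(h_{θ',j})` for all `X ∈ 𝒳` and all `j` forces the base models to
coincide everywhere, then the perturbation cost is zero for every `δ > 0`. -/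
theorem perturbCost_eq_zero_of_functional_identifiability
    {Θ Xs V : Type*} [Fintype Xs] [Nonempty Xs] [Fintype V] [Nonempty V]
    (M : Xs → Xs → ℝ) (supp : Finset Xs) (hsupp : supp.Nonempty)
    (T : Xs → Xs → ℝ) (hT : ∀ X, (∀ Y, 0 ≤ T X Y) ∧ ∑ Y, T X Y = 1)
    (P : Θ → Xs → V → ℝ) (hP : ∀ θ X, (∀ i, 0 ≤ P θ X i) ∧ ∑ i, P θ X i = 1)
    (d : ℕ) (f : Fin d → V → ℝ)
    (hident : ∀ θ θ' : Θ,
      (∀ X ∈ supp, ∀ j : Fin d,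
        (∑ Xt, T X Xt * ∑ i, f j i * P θ Xt i) =
          (∑ Xt, T X Xt * ∑ i, f j i * P θ' Xt i)) →
      ∀ Xt : Xs, P θ Xt = P θ' Xt) :
    ∀ δ : ℝ, 0 < δ → perturbCost M supp hsupp T P δ = 0 := by
  intro δ _
  unfold perturbCost
  set S : Set ℝ := { r | ∃ X' Xstar θ θ',
    distToSupp M supp hsupp X' ≤ δ ∧ 0 < T X' Xstar ∧
    (∀ X ∈ supp, tvDist (perturbedModel T P θ X) (perturbedModel T P θ' X) = 0) ∧
    r = sInf { s | ∃ θ₀ θ₀',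
      (∀ X ∈ supp, tvDist (P θ₀ X) (P θ₀' X) = 0) ∧
      s = tvDist (fun i => P θ Xstar i - P θ₀ Xstar i)
                 (fun i => P θ' Xstar i - P θ₀' Xstar i) } } with hSdef
  have hsub : S ⊆ {0} := by
    rintro r ⟨X', Xstar, θ, θ', _, _, hperturb, hr⟩
    have hpeq : ∀ X ∈ supp, perturbedModel T P θ X = perturbedModel T P θ' X := by
      intro X hX
      exact (tvDist_eq_zero_iff _ _).1 (hperturb X hX)
    have heq : ∀ Xt : Xs, P θ Xt = P θ' Xt := by
      apply hident
      intro X hX j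
      have key : ∀ ϑ : Θ, (∑ Xt, T X Xt * ∑ i, f j i * P ϑ Xt i)
          = ∑ i, f j i * perturbedModel T P ϑ X i := by
        intro ϑ
        unfold perturbedModel
        simp only [Finset.mul_sum]
        rw [Finset.sum_comm]
        exact Finset.sum_congr rfl fun i _ => Finset.sum_congr rfl fun Xt _ => by ring
      rw [key θ, key θ', hpeq X hX]
    have hmem0 : (0 : ℝ) ∈ { s | ∃ θ₀ θ₀',
        (∀ X ∈ supp, tvDist (P θ₀ X) (P θ₀' X) = 0) ∧
        s = tvDist (fun i => P θ Xstar i - P θ₀ Xstar i)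
                   (fun i => P θ' Xstar i - P θ₀' Xstar i) } := by
      refine ⟨θ, θ', fun X _ => (tvDist_eq_zero_iff _ _).2 (heq X), ?_⟩
      have : tvDist (fun i => P θ Xstar i - P θ Xstar i)
          (fun i => P θ' Xstar i - P θ' Xstar i) = 0 := by
        apply (tvDist_eq_zero_iff _ _).2
        funext i; simp
      exact this.symm
    have hbdd : ∀ s ∈ { s | ∃ θ₀ θ₀',
        (∀ X ∈ supp, tvDist (P θ₀ X) (P θ₀' X) = 0) ∧
        s = tvDist (fun i => P θ Xstar i - P θ₀ Xstar i)
                   (fun i => P θ' Xstar i - P θ₀' Xstar i) }, (0 : ℝ) ≤ s := by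
      rintro s ⟨θ₀, θ₀', _, rfl⟩
      exact tvDist_nonneg' _ _
    have : r = 0 := by
      rw [hr]
      exact le_antisymm (csInf_le ⟨0, hbdd⟩ hmem0) (le_csInf ⟨0, hmem0⟩ hbdd)
    simp [this]
  rcases Set.eq_empty_or_nonempty S with hS | hS
  · rw [hS, Real.sSup_empty]
  · have : S = {0} := le_antisymm hsub (by
      obtain ⟨x, hx⟩ := hS
      have := hsub hx
      simp only [Set.mem_singleton_iff] at this
      subst this
      intro y hy
      simp only [Set.mem_singleton_iff] at hy
      subst hy
      exact hx)
    rw [this, csSup_singleton]
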